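/- For every integer n ≥ 2, √(e/π) · (1 − 1/(2n))^n · √(n−1)/n < (2n−1)!!/(2n)!! ≤ (4/3) · (1 − 1/(2n))^n · √(n−1)/n. -/
import Mathlib

open Real Filter Topology

/-- The Wallis ratio W(n) = (2n-1)!!/(2n)!!. -/
noncomputable def W (n : ℕ) : ℝ :=
  (∏ k ∈ Finset.range n, (2 * (k : ℝ) + 1)) / (∏ k ∈ Finset.range n, (2 * (k : ℝ) + 2))

lemma W_pos' (n : ℕ) : 0 < W n := by
  apply div_pos <;> exact Finset.prod_pos fun i _ => by positivity

lemma W_succ' (n : ℕ) : W (n + 1) = W n * ((2 * n + 1) / (2 * n + 2)) := by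
  unfold W
  rw [Finset.prod_range_succ, Finset.prod_range_succ, div_mul_div_comm]

lemma WP (n : ℕ) : W n ^ 2 * (2 * (n : ℝ) + 1) * Real.Wallis.W n = 1 := by
  induction n with
  | zero => simp [W, Real.Wallis.W]
  | succ n ih =>
    rw [Real.Wallis.W_succ, W_succ']
    have h1 : (2 * (n : ℝ) + 1) ≠ 0 := by positivity
    have h2 : (2 * (n : ℝ) + 2) ≠ 0 := by positivity
    have h3 : (2 * (n : ℝ) + 3) ≠ 0 := by positivity
    have key : (W n * ((2 * (n:ℝ) + 1) / (2 * (n:ℝ) + 2))) ^ 2 * (2 * ((n:ℝ) + 1) + 1) *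
        (Real.Wallis.W n * ((2 * (n:ℝ) + 2) / (2 * (n:ℝ) + 1) * ((2 * (n:ℝ) + 2) / (2 * (n:ℝ) + 3)))) =
        W n ^ 2 * (2 * (n:ℝ) + 1) * Real.Wallis.W n := by
      field_simp
      ring
    push_cast
    rw [key, ih]

lemma WallisW_lt (n : ℕ) : Real.Wallis.W n < π / 2 := by
  have h1 : Real.Wallis.W n < Real.Wallis.W (n + 1) := by
    rw [Real.Wallis.W_succ]
    have hp := Real.Wallis.W_pos n
    have hc : (1:ℝ) < (2 * n + 2) / (2 * n + 1) * ((2 * n + 2) / (2 * n + 3)) := by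
      rw [div_mul_div_comm, lt_div_iff₀ (by positivity)]
      have : (0:ℝ) ≤ (n:ℝ) := Nat.cast_nonneg n
      nlinarith
    nlinarith
  exact h1.trans_le (Real.Wallis.W_le (n + 1))

lemma lower_sq (n : ℕ) : 2 / (π * (2 * (n : ℝ) + 1)) < W n ^ 2 := by
  have hP := WP n
  have hPpos := Real.Wallis.W_pos n
  have hlt := WallisW_lt n
  have hpi := Real.pi_pos
  have h1 : (0:ℝ) < 2 * (n : ℝ) + 1 := by positivity
  rw [div_lt_iff₀ (by positivity)]
  have h2 : W n ^ 2 * (2 * (n : ℝ) + 1) = 1 / Real.Wallis.W n := by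
    field_simp [ne_of_gt hPpos] at hP ⊢
    linarith [hP]
  have h3 : 2 / π < 1 / Real.Wallis.W n := by
    rw [div_lt_div_iff₀ hpi hPpos]
    linarith
  calc 2 = (2/π) * π := by field_simp
  _ < (1 / Real.Wallis.W n) * π := mul_lt_mul_of_pos_right h3 hpi
  _ = W n ^ 2 * (2 * (n:ℝ) + 1) * π := by rw [h2]
  _ = W n ^ 2 * (π * (2 * (n:ℝ) + 1)) := by ring

lemma b_dec (M : ℕ) (hM : 1 ≤ M) :
    (((M:ℝ) + 2) / ((M:ℝ) + 1)) ^ (M + 2) ≤ (((M:ℝ) + 1) / (M:ℝ)) ^ (M + 1) := by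
  have hM0 : (0:ℝ) < M := by exact_mod_cast hM
  have h1 : ((M:ℝ) + 2) / ((M:ℝ) + 1) ≤ (1 + 1 / ((M:ℝ) * ((M:ℝ) + 2))) ^ (M + 1) := by
    have hb : (1:ℝ) + (M + 1) * (1 / ((M:ℝ) * ((M:ℝ) + 2))) ≤
        (1 + 1 / ((M:ℝ) * ((M:ℝ) + 2))) ^ (M + 1) := by
      have hx : (0:ℝ) ≤ 1 / ((M:ℝ) * ((M:ℝ) + 2)) := by positivity
      have := one_add_mul_le_pow (a := 1 / ((M:ℝ) * ((M:ℝ) + 2))) (by linarith) (M + 1)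
      calc (1:ℝ) + (M + 1) * (1 / ((M:ℝ) * ((M:ℝ) + 2)))
          = 1 + ((M:ℕ) + 1 : ℕ) * (1 / ((M:ℝ) * ((M:ℝ) + 2))) := by push_cast; ring
        _ ≤ _ := this
    refine le_trans ?_ hb
    have hrw : 1 + ((M:ℝ) + 1) * (1 / ((M:ℝ) * ((M:ℝ) + 2))) =
        ((M:ℝ) * ((M:ℝ) + 2) + ((M:ℝ) + 1)) / ((M:ℝ) * ((M:ℝ) + 2)) := by field_simp
    rw [hrw, div_le_div_iff₀ (by positivity) (by positivity)]
    nlinarith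
  calc (((M:ℝ) + 2) / ((M:ℝ) + 1)) ^ (M + 2)
      = (((M:ℝ) + 2) / ((M:ℝ) + 1)) ^ (M + 1) * (((M:ℝ) + 2) / ((M:ℝ) + 1)) := by
        rw [pow_succ]
    _ ≤ (((M:ℝ) + 2) / ((M:ℝ) + 1)) ^ (M + 1) * (1 + 1 / ((M:ℝ) * ((M:ℝ) + 2))) ^ (M + 1) := by
        refine mul_le_mul_of_nonneg_left h1 (by positivity)
    _ = ((((M:ℝ) + 2) / ((M:ℝ) + 1)) * (1 + 1 / ((M:ℝ) * ((M:ℝ) + 2)))) ^ (M + 1) := by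
        rw [← mul_pow]
    _ = (((M:ℝ) + 1) / (M:ℝ)) ^ (M + 1) := by
        congr 1
        field_simp
        ring

lemma key (n : ℕ) (hn : 1 ≤ n) :
    ((2 * (n:ℝ) - 1) / (2 * (n:ℝ))) ^ (2 * n) ≤ ((2 * (n:ℝ) + 1) / (2 * (n:ℝ) + 2)) ^ (2 * n + 2) := by
  have hn0 : (1:ℝ) ≤ (n:ℝ) := by exact_mod_cast hn
  have hA := b_dec (2 * n) (by omega)
  have hB := b_dec (2 * n - 1) (by omega)
  have hc : ((2 * n - 1 : ℕ) : ℝ) = 2 * (n:ℝ) - 1 := by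
    have : (1:ℕ) ≤ 2 * n := by omega
    push_cast [Nat.cast_sub this]
    ring
  rw [hc] at hB
  have he : 2 * n - 1 + 1 = 2 * n := by omega
  have he2 : 2 * n - 1 + 2 = 2 * n + 1 := by omega
  rw [he, he2] at hB
  push_cast at hA hB
  have e1 : 2 * (n:ℝ) - 1 + 2 = 2 * (n:ℝ) + 1 := by ring
  have e2 : 2 * (n:ℝ) - 1 + 1 = 2 * (n:ℝ) := by ring
  rw [e1, e2] at hB
  have hch := hA.trans hB
  have hpos : (0:ℝ) < ((2 * (n:ℝ) + 2) / (2 * (n:ℝ) + 1)) ^ (2 * n + 2) := by positivity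
  have hinv := inv_anti₀ hpos hch
  rwa [← inv_pow, ← inv_pow, inv_div, inv_div] at hinv

lemma upper_sq (n : ℕ) (hn : 2 ≤ n) :
    W n ^ 2 * (n:ℝ) ^ 2 ≤ 16 / 9 * ((2 * (n:ℝ) - 1) / (2 * (n:ℝ))) ^ (2 * n) * ((n:ℝ) - 1) := by
  induction n, hn using Nat.le_induction with
  | base => norm_num [W, Finset.prod_range_succ]
  | succ n hn IH =>
    have hn1 : (1:ℝ) ≤ (n:ℝ) := by exact_mod_cast hn.trans' one_le_two
    have hWs := W_succ' n
    have hkey := key n (by omega)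
    have hb0 : (0:ℝ) ≤ (2 * (n:ℝ) - 1) / (2 * (n:ℝ)) := div_nonneg (by linarith) (by positivity)
    have hx : (0:ℝ) ≤ ((2 * (n:ℝ) - 1) / (2 * (n:ℝ))) ^ (2 * n) := pow_nonneg hb0 _
    have step1 : W (n+1) ^ 2 * ((n:ℝ)+1) ^ 2 = (W n ^ 2 * (n:ℝ) ^ 2) * ((2*(n:ℝ)+1)^2 / (4 * (n:ℝ)^2)) := by
      rw [hWs]
      have : (2 * (n:ℝ) + 2) ≠ 0 := by positivity
      have : (n:ℝ) ≠ 0 := by positivity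
      field_simp
      ring
    have hfrac : ((n:ℝ) - 1) * ((2*(n:ℝ)+1)^2 / (4 * (n:ℝ)^2)) ≤ (n:ℝ) := by
      have hrw : ((n:ℝ) - 1) * ((2*(n:ℝ)+1)^2 / (4 * (n:ℝ)^2)) =
          (((n:ℝ) - 1) * (2*(n:ℝ)+1)^2) / (4 * (n:ℝ)^2) := by ring
      rw [hrw, div_le_iff₀ (by positivity)]
      nlinarith
    calc W (n+1) ^ 2 * (((n:ℕ)+1:ℕ):ℝ) ^ 2
        = (W n ^ 2 * (n:ℝ) ^ 2) * ((2*(n:ℝ)+1)^2 / (4 * (n:ℝ)^2)) := by push_cast; exact step1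
      _ ≤ (16 / 9 * ((2 * (n:ℝ) - 1) / (2 * (n:ℝ))) ^ (2 * n) * ((n:ℝ) - 1)) * ((2*(n:ℝ)+1)^2 / (4 * (n:ℝ)^2)) := by
          exact mul_le_mul_of_nonneg_right IH (by positivity)
      _ = 16 / 9 * (((2 * (n:ℝ) - 1) / (2 * (n:ℝ))) ^ (2 * n) * (((n:ℝ) - 1) * ((2*(n:ℝ)+1)^2 / (4 * (n:ℝ)^2)))) := by
          ring
      _ ≤ 16 / 9 * (((2 * (n:ℝ) + 1) / (2 * (n:ℝ) + 2)) ^ (2 * n + 2) * (n:ℝ)) := by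
          have hf2 : (0:ℝ) ≤ ((n:ℝ) - 1) * ((2*(n:ℝ)+1)^2 / (4 * (n:ℝ)^2)) := by
            apply mul_nonneg (by linarith) (by positivity)
          have hm := mul_le_mul hkey hfrac hf2 (by positivity)
          exact mul_le_mul_of_nonneg_left hm (by norm_num)
      _ = 16 / 9 * ((2 * (((n:ℕ)+1:ℕ):ℝ) - 1) / (2 * (((n:ℕ)+1:ℕ):ℝ))) ^ (2 * (n+1)) * ((((n:ℕ)+1:ℕ):ℝ) - 1) := by
          push_cast
          have : 2 * (n + 1) = 2 * n + 2 := by ring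
          rw [this]
          ring_nf

theorem wallis_guo_xu_qi (n : ℕ) (hn : 2 ≤ n) :
    Real.sqrt (Real.exp 1 / π) * (1 - 1 / (2 * (n : ℝ))) ^ n * Real.sqrt ((n : ℝ) - 1) / n
      < W n ∧
    W n ≤ (4 / 3) * (1 - 1 / (2 * (n : ℝ))) ^ n * Real.sqrt ((n : ℝ) - 1) / n := by
  have hn2 : (2:ℝ) ≤ (n:ℝ) := by exact_mod_cast hn
  have hn0 : (0:ℝ) < (n:ℝ) := by linarith
  have hnne : (n:ℝ) ≠ 0 := ne_of_gt hn0
  have hpi := Real.pi_pos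
  have hb : 1 - 1 / (2 * (n:ℝ)) = (2 * (n:ℝ) - 1) / (2 * (n:ℝ)) := by
    field_simp
  have hbpos : (0:ℝ) < 1 - 1 / (2 * (n:ℝ)) := by
    rw [hb]
    apply div_pos (by linarith) (by linarith)
  have hs1 : Real.sqrt ((n:ℝ) - 1) ^ 2 = (n:ℝ) - 1 := Real.sq_sqrt (by linarith)
  have hbsq : ((1 - 1 / (2 * (n:ℝ))) ^ n) ^ 2 = (1 - 1 / (2 * (n:ℝ))) ^ (2 * n) := by
    rw [← pow_mul, Nat.mul_comm]
  constructor
  · -- lower bound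
    set L := Real.sqrt (Real.exp 1 / π) * (1 - 1 / (2 * (n : ℝ))) ^ n * Real.sqrt ((n : ℝ) - 1) / n with hL
    have hLnn : 0 ≤ L := by
      apply div_nonneg _ hn0.le
      apply mul_nonneg (mul_nonneg (Real.sqrt_nonneg _) (pow_nonneg hbpos.le _)) (Real.sqrt_nonneg _)
    have hs0 : Real.sqrt (Real.exp 1 / π) ^ 2 = Real.exp 1 / π :=
      Real.sq_sqrt (by positivity)
    have hL2 : L ^ 2 = (Real.exp 1 / π) * (1 - 1 / (2 * (n:ℝ))) ^ (2 * n) * ((n:ℝ) - 1) / (n:ℝ) ^ 2 := by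
      rw [hL]
      rw [div_pow, mul_pow, mul_pow, hs0, hs1, hbsq]
    have hexp : (1 - 1 / (2 * (n:ℝ))) ^ (2 * n) ≤ Real.exp (-1) := by
      have h1 : 1 - 1 / (2 * (n:ℝ)) ≤ Real.exp (-(1 / (2 * (n:ℝ)))) := by
        have := Real.add_one_le_exp (-(1 / (2 * (n:ℝ))))
        linarith
      have h2 : (1 - 1 / (2 * (n:ℝ))) ^ (2 * n) ≤ Real.exp (-(1 / (2 * (n:ℝ)))) ^ (2 * n) :=
        pow_le_pow_left₀ hbpos.le h1 _
      have h3 : Real.exp (-(1 / (2 * (n:ℝ)))) ^ (2 * n) = Real.exp (-1) := by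
        rw [← Real.exp_nat_mul]
        congr 1
        push_cast
        field_simp
      rwa [h3] at h2
    have hL2' : L ^ 2 ≤ ((n:ℝ) - 1) / (π * (n:ℝ) ^ 2) := by
      rw [hL2]
      have hee : Real.exp 1 / π * Real.exp (-1) = 1 / π := by
        rw [Real.exp_neg]
        field_simp [Real.exp_ne_zero]
      calc Real.exp 1 / π * (1 - 1 / (2 * (n:ℝ))) ^ (2 * n) * ((n:ℝ) - 1) / (n:ℝ) ^ 2
          ≤ Real.exp 1 / π * Real.exp (-1) * ((n:ℝ) - 1) / (n:ℝ) ^ 2 := by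
            apply div_le_div_of_nonneg_right _ (by positivity)
            apply mul_le_mul_of_nonneg_right _ (by linarith)
            exact mul_le_mul_of_nonneg_left hexp (by positivity)
        _ = ((n:ℝ) - 1) / (π * (n:ℝ) ^ 2) := by rw [hee]; field_simp
    have hmid : ((n:ℝ) - 1) / (π * (n:ℝ) ^ 2) < 2 / (π * (2 * (n:ℝ) + 1)) := by
      rw [div_lt_div_iff₀ (by positivity) (by positivity)]
      nlinarith
    have : L ^ 2 < W n ^ 2 := lt_of_le_of_lt hL2' (lt_trans hmid (lower_sq n))
    exact lt_of_pow_lt_pow_left₀ 2 (W_pos' n).le this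
  · -- upper bound
    set R := (4 / 3) * (1 - 1 / (2 * (n : ℝ))) ^ n * Real.sqrt ((n : ℝ) - 1) / n with hR
    have hRnn : 0 ≤ R := by
      apply div_nonneg _ hn0.le
      apply mul_nonneg (mul_nonneg (by norm_num) (pow_nonneg hbpos.le _)) (Real.sqrt_nonneg _)
    have hR2 : R ^ 2 = 16 / 9 * (1 - 1 / (2 * (n:ℝ))) ^ (2 * n) * ((n:ℝ) - 1) / (n:ℝ) ^ 2 := by
      rw [hR, div_pow, mul_pow, mul_pow, hs1, hbsq]
      norm_num
    have hWsq : W n ^ 2 ≤ R ^ 2 := by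
      rw [hR2, hb]
      have := upper_sq n hn
      rw [le_div_iff₀ (by positivity)]
      linarith
    exact le_of_pow_le_pow_left₀ two_ne_zero hRnn hWsq
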